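/- arXiv:2301.13307 — 3 statements merged into one kernel-verified Lean document; each statement's English description precedes it below -/
import Mathlib

section
/- In the balls-in-urns game with k urns each initially containing one ball and termination threshold Δ, the recursively defined adversary value function R satisfies: for every number of untouched urns u ∈ {0,…,k}, the map N ↦ R(N,u) is non-increasing in N, and for N < k with Δu − N > 0, the maximum in the recursion defining R(N,u) is achieved by the term R(N+1, u), so that R(N,u) = 1 + R(N+1,u). -/
/-- The adversary value function `R` of the balls-in-urns game with `k` urns and threshold
`Δ`: `R N u = 0` whenever `Δ·u ≤ N`; otherwise for `N < k`,
`R N u = 1 + max (R (N - ⌈N/u⌉ + 1) (u-1)) (R (N - ⌊N/u⌋ + 1) (u-1)) (R (N+1) u)`, and for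
`N = k` the last term is omitted.  Then `N ↦ R N u` is non-increasing on `{0,…,k}` and for
`N < k` with `Δ·u - N > 0` the maximum is achieved by `R (N+1) u`, i.e.
`R N u = 1 + R (N+1) u`. -/
theorem game_value_monotone_and_best_response (k Δ : ℕ) (hk : 1 ≤ k) (hΔ : 1 ≤ Δ)
    (R : ℕ → ℕ → ℕ)
    (hstop : ∀ N u, Δ * u ≤ N → R N u = 0)
    (hrec : ∀ N u, N < k → N < Δ * u →
      R N u = 1 + max (R (N - (N + u - 1) / u + 1) (u - 1))
        (max (R (N - N / u + 1) (u - 1)) (R (N + 1) u)))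
    (hreck : ∀ u, k < Δ * u →
      R k u = 1 + max (R (k - (k + u - 1) / u + 1) (u - 1))
        (R (k - k / u + 1) (u - 1))) :
    (∀ u N M, u ≤ k → N ≤ M → M ≤ k → R M u ≤ R N u) ∧
    (∀ u N, u ≤ k → N < k → N < Δ * u → R N u = 1 + R (N + 1) u) := by
  have mstep : ∀ u N, N < k → R (N + 1) u ≤ R N u := by
    intro u N hN
    by_cases h : Δ * u ≤ N
    · rw [hstop N u h, hstop (N + 1) u (by omega)]
    · rw [hrec N u hN (by omega)]
      exact (le_max_right _ _).trans ((le_max_right _ _).trans (Nat.le_add_left _ 1))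
  have mono : ∀ u N M, N ≤ M → M ≤ k → R M u ≤ R N u := by
    intro u N M hNM
    induction M, hNM using Nat.le_induction with
    | base => intro _; exact le_refl _
    | succ M hM ih =>
      intro hMk
      exact (mstep u M (by omega)).trans (ih (by omega))
  have key : ∀ u N, 1 ≤ u → u ≤ k → N < k → N < Δ * u →
      R (N - (N + u - 1) / u + 1) (u - 1) ≤ R (N + 1) u := by
    intro u
    induction u with
    | zero => intro N h; omega
    | succ v ih =>
      intro N _ huk hNk hNlt
      rw [show N + (v + 1) - 1 = N + v from by omega, show v + 1 - 1 = v from by omega]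
      set M := N - (N + v) / (v + 1) + 1 with hMdef
      have hexp : Δ * (v + 1) = Δ * v + Δ := by ring
      have hcΔ : (N + v) / (v + 1) ≤ Δ := by
        have h2 : (Δ + 1) * (v + 1) = Δ * (v + 1) + (v + 1) := by ring
        have h3 : (N + v) / (v + 1) < Δ + 1 :=
          (Nat.div_lt_iff_lt_mul (by omega)).mpr (by omega)
        omega
      by_cases hMstop : Δ * v ≤ M
      · rw [hstop M v hMstop]; exact Nat.zero_le _
      · have hMlt : M < Δ * v := lt_of_not_ge hMstop
        have hv1 : 1 ≤ v := by
          rcases Nat.eq_zero_or_pos v with rfl | h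
          · omega
          · exact h
        have hN1 : N + 1 < Δ * (v + 1) := by omega
        have hMk : M < k := by
          rcases Nat.eq_zero_or_pos N with rfl | hN
          · have hc0 : (0 + v) / (v + 1) = 0 := Nat.div_eq_of_lt (by omega)
            omega
          · have hc1 : 1 ≤ (N + v) / (v + 1) :=
              (Nat.le_div_iff_mul_le (by omega)).mpr (by omega)
            omega
        rw [hrec M v hMk hMlt]
        have hT1 : R (M - (M + v - 1) / v + 1) (v - 1) ≤ R (M + 1) v :=
          ih M hv1 (by omega) hMk hMlt
        have hdiv : M / v ≤ (M + v - 1) / v := Nat.div_le_div_right (by omega)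
        have hT2 : R (M - M / v + 1) (v - 1) ≤ R (M - (M + v - 1) / v + 1) (v - 1) :=
          mono (v - 1) _ _ (Nat.add_le_add_right (Nat.sub_le_sub_left hdiv M) 1)
            ((Nat.add_le_add_right (Nat.sub_le M (M / v)) 1).trans (by omega : M + 1 ≤ k))
        have hc'1 : 1 ≤ (N + 1 + v) / (v + 1) :=
          (Nat.le_div_iff_mul_le (by omega)).mpr (by omega)
        have hcc' : (N + v) / (v + 1) ≤ (N + 1 + v) / (v + 1) :=
          Nat.div_le_div_right (by omega)
        have hM1 : R (M + 1) v ≤ R (N + 1 - (N + 1 + v) / (v + 1) + 1) v :=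
          mono v _ _ (by omega) (by omega)
        rcases Nat.lt_or_ge (N + 1) k with hlt | hge
        · rw [hrec (N + 1) (v + 1) hlt hN1,
              show N + 1 + (v + 1) - 1 = N + 1 + v from by omega,
              show v + 1 - 1 = v from by omega]
          omega
        · have hkN : N + 1 = k := by omega
          rw [hkN, hreck (v + 1) (by omega),
              show k + (v + 1) - 1 = k + v from by omega,
              show v + 1 - 1 = v from by omega, ← hkN]
          omega
  refine ⟨fun u N M _ h1 h2 => mono u N M h1 h2, fun u N huk hNk hNlt => ?_⟩
  have hu1 : 1 ≤ u := by
    rcases Nat.eq_zero_or_pos u with rfl | h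
    · omega
    · exact h
  rw [hrec N u hNk hNlt]
  have hA := key u N hu1 huk hNk hNlt
  have hdiv : N / u ≤ (N + u - 1) / u := Nat.div_le_div_right (by omega)
  have hB : R (N - N / u + 1) (u - 1) ≤ R (N - (N + u - 1) / u + 1) (u - 1) :=
    mono (u - 1) _ _ (Nat.add_le_add_right (Nat.sub_le_sub_left hdiv N) 1)
      ((Nat.add_le_add_right (Nat.sub_le N (N / u)) 1).trans (by omega : N + 1 ≤ k))
  omega
end

section
/- In the balls-in-urns game with k urns, k balls (one per urn initially), and threshold Δ, if the player always moves the ball taken by the adversary into an untouched urn with the minimum current number of balls, then the game terminates (all untouched urns hold at least Δ balls, or no untouched urns remain) after at most k·min{log Δ, log k} + k rounds, for any adversary strategy. -/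
/-!
Let `v t` be the load of the urn that receives the ball in round `t`. While the game runs,
`1 ≤ v t < min Δ k`. An untouched urn never loses balls, so the rounds with `v t = w` send
their balls to pairwise distinct urns, and by minimality each of these holds at least `w` balls
at the first such round; with `k` balls in total there are at most `k / w` such rounds. Hence
the game ends within `∑_{w ≤ min Δ k} k / w ≤ k · H_{min Δ k} ≤ k (1 + log (min Δ k))` rounds.
-/

open Finset

structure IsGreedyRound {k : ℕ} (load : ℕ → Fin k → ℕ) (a b : ℕ → Fin k) (t : ℕ) : Prop where
  one_le_load_source : 1 ≤ load t (a t)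
  target_untouched : ∀ s ≤ t, a s ≠ b t
  load_target_le : ∀ j, (∀ s ≤ t, a s ≠ j) → load t (b t) ≤ load t j
  load_succ : ∀ i, load (t + 1) i
    = load t i - (if i = a t then 1 else 0) + (if i = b t then 1 else 0)

namespace IsGreedyRound

variable {k t : ℕ} {load : ℕ → Fin k → ℕ} {a b : ℕ → Fin k}

theorem load_le_load_succ (h : IsGreedyRound load a b t) {i : Fin k} (hi : i ≠ a t) :
    load t i ≤ load (t + 1) i := by
  rw [h.load_succ i, if_neg hi]
  omega

theorem load_succ_target (h : IsGreedyRound load a b t) :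
    load (t + 1) (b t) = load t (b t) + 1 := by
  rw [h.load_succ, if_neg (h.target_untouched t le_rfl).symm, if_pos rfl]
  omega

theorem sum_load_succ (h : IsGreedyRound load a b t) :
    ∑ i, load (t + 1) i = ∑ i, load t i := by
  have hcell : ∀ i, load (t + 1) i + (if i = a t then 1 else 0)
      = load t i + (if i = b t then 1 else 0) := by
    intro i
    have := h.one_le_load_source
    rw [h.load_succ i]
    by_cases hi : i = a t
    · subst hi
      split_ifs <;> omega
    · split_ifs <;> omega
  simpa [sum_add_distrib] using sum_congr rfl fun i (_ : i ∈ univ) => hcell i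

end IsGreedyRound

section

variable {k N : ℕ} {load : ℕ → Fin k → ℕ} {a b : ℕ → Fin k}

theorem load_le_load_of_untouched (hround : ∀ t < N, IsGreedyRound load a b t) {t t' : ℕ}
    (htt' : t ≤ t') (ht' : t' ≤ N) {j : Fin k} (hj : ∀ s < t', a s ≠ j) :
    load t j ≤ load t' j := by
  induction t', htt' using Nat.le_induction with
  | base => exact le_rfl
  | succ t' _ ih =>
    exact (ih (by omega) fun s hs => hj s (by omega)).trans
      ((hround t' (by omega)).load_le_load_succ (hj t' (by omega)).symm)

theorem one_le_load_of_untouched (hinit : ∀ i, load 0 i = 1)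
    (hround : ∀ t < N, IsGreedyRound load a b t) {t : ℕ} (ht : t ≤ N) {j : Fin k}
    (hj : ∀ s < t, a s ≠ j) : 1 ≤ load t j :=
  (hinit j).ge.trans (load_le_load_of_untouched hround t.zero_le ht hj)

theorem sum_load_eq (hinit : ∀ i, load 0 i = 1) (hround : ∀ t < N, IsGreedyRound load a b t)
    {t : ℕ} (ht : t ≤ N) : ∑ i, load t i = k := by
  induction t with
  | zero => simp [hinit]
  | succ t ih => rw [(hround t (by omega)).sum_load_succ, ih (by omega)]

theorem load_target_lt_of_target_eq (hround : ∀ t < N, IsGreedyRound load a b t) {t t' : ℕ}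
    (htt' : t < t') (ht' : t' < N) (hb : b t = b t') : load t (b t) < load t' (b t') := by
  have huntouched : ∀ s < t', a s ≠ b t' := fun s hs => (hround t' ht').target_untouched s hs.le
  calc load t (b t) < load (t + 1) (b t) := by
        rw [(hround t (htt'.trans ht')).load_succ_target]
        omega
    _ ≤ load t' (b t') := by
        rw [hb]
        exact load_le_load_of_untouched hround htt' ht'.le huntouched

theorem load_target_mem_Ico (hinit : ∀ i, load 0 i = 1)
    (hround : ∀ t < N, IsGreedyRound load a b t) {Δ t : ℕ} (ht : t < N)
    (hopen : ∃ i, (∀ s < t + 1, a s ≠ i) ∧ load (t + 1) i < Δ) :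
    load t (b t) ∈ Ico 1 (min Δ k) := by
  have h := hround t ht
  obtain ⟨i, hi, hiΔ⟩ := hopen
  have hpos : 1 ≤ load t (b t) :=
    one_le_load_of_untouched hinit hround ht.le fun s hs => h.target_untouched s hs.le
  have hltΔ : load t (b t) < Δ :=
    ((h.load_target_le i fun s hs => hi s (by omega)).trans
      (h.load_le_load_succ (hi t (by omega)).symm)).trans_lt hiΔ
  have hltk : load t (a t) + load t (b t) ≤ k :=
    sum_load_eq hinit hround ht.le ▸
      add_le_sum (fun _ _ => Nat.zero_le _) (mem_univ _) (mem_univ _) (h.target_untouched t le_rfl)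
  have := h.one_le_load_source
  simp only [mem_Ico, lt_min_iff]
  omega

theorem mul_card_filter_load_target_eq_le (hinit : ∀ i, load 0 i = 1)
    (hround : ∀ t < N, IsGreedyRound load a b t) (w : ℕ) :
    w * #{t ∈ range N | load t (b t) = w} ≤ k := by
  set F := {t ∈ range N | load t (b t) = w}
  rcases F.eq_empty_or_nonempty with hF | hF
  · simp [hF]
  have hF_spec : ∀ t ∈ F, t < N ∧ load t (b t) = w := fun t ht => by
    simpa [F] using ht
  set t₀ := F.min' hF
  have ht₀ := hF_spec t₀ (F.min'_mem hF)
  have hinj : Set.InjOn b F := by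
    intro t ht t' ht' hb
    obtain ⟨htN, hw⟩ := hF_spec t ht
    obtain ⟨ht'N, hw'⟩ := hF_spec t' ht'
    by_contra hne
    rcases lt_or_gt_of_ne hne with hlt | hlt
    · exact (load_target_lt_of_target_eq hround hlt ht'N hb).ne (hw.trans hw'.symm)
    · exact (load_target_lt_of_target_eq hround hlt htN hb.symm).ne (hw'.trans hw.symm)
  have hmin : ∀ t ∈ F, w ≤ load t₀ (b t) := fun t ht => by
    rw [← ht₀.2]
    exact (hround t₀ ht₀.1).load_target_le (b t) fun s hs =>
      (hround t (hF_spec t ht).1).target_untouched s (hs.trans (F.min'_le t ht))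
  calc w * #F = ∑ t ∈ F, w := by rw [sum_const, smul_eq_mul, mul_comm]
    _ ≤ ∑ t ∈ F, load t₀ (b t) := sum_le_sum hmin
    _ = ∑ j ∈ F.image b, load t₀ j := (sum_image hinj).symm
    _ ≤ ∑ j, load t₀ j := sum_le_sum_of_subset (subset_univ _)
    _ = k := sum_load_eq hinit hround ht₀.1.le

theorem le_sum_Ico_div (hinit : ∀ i, load 0 i = 1)
    (hround : ∀ t < N, IsGreedyRound load a b t) {Δ : ℕ}
    (hopen : ∀ t < N, ∃ i, (∀ s < t + 1, a s ≠ i) ∧ load (t + 1) i < Δ) :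
    N ≤ ∑ w ∈ Ico 1 (min Δ k), k / w := by
  have hmem : ∀ t ∈ range N, load t (b t) ∈ Ico 1 (min Δ k) := fun t ht =>
    load_target_mem_Ico hinit hround (mem_range.1 ht) (hopen t (mem_range.1 ht))
  calc N = ∑ w ∈ Ico 1 (min Δ k), #{t ∈ range N | load t (b t) = w} := by
        rw [← card_eq_sum_card_fiberwise hmem, card_range]
    _ ≤ ∑ w ∈ Ico 1 (min Δ k), k / w := sum_le_sum fun w hw =>
        (Nat.le_div_iff_mul_le (mem_Ico.1 hw).1).2
          (mul_comm w _ ▸ mul_card_filter_load_target_eq_le hinit hround w)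

end

theorem cast_sum_Icc_div_le_mul_one_add_log (k M : ℕ) :
    ((∑ w ∈ Icc 1 M, k / w : ℕ) : ℝ) ≤ k * (1 + Real.log M) :=
  calc ((∑ w ∈ Icc 1 M, k / w : ℕ) : ℝ) ≤ ∑ w ∈ Icc 1 M, (k : ℝ) / w := by
        push_cast
        exact sum_le_sum fun w _ => Nat.cast_div_le
    _ = k * harmonic M := by
        simp [harmonic_eq_sum_Icc, mul_sum, div_eq_mul_inv]
    _ ≤ k * (1 + Real.log M) :=
        mul_le_mul_of_nonneg_left (harmonic_le_one_add_log M) k.cast_nonneg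

theorem Real.log_min {x y : ℝ} (hx : 0 < x) (hy : 0 < y) :
    Real.log (min x y) = min (Real.log x) (Real.log y) := by
  rcases le_total x y with h | h
  · rw [min_eq_left h, min_eq_left (Real.log_le_log hx h)]
  · rw [min_eq_right h, min_eq_right (Real.log_le_log hy h)]

/-- Balls-in-urns game: `k` urns, one ball each initially.  At round `t`, while the game
has not ended (some urn untouched by the adversary has fewer than `Δ` balls), the
adversary picks a nonempty urn `a t`, the player picks an untouched urn `b t` of minimum
load, and a ball moves from `a t` to `b t`.  Then the game ends (all untouched urns hold
at least `Δ` balls) after at most `k·min(log Δ, log k) + k` rounds. -/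
theorem balls_in_urns_termination (k Δ : ℕ) (hk : 1 ≤ k) (hΔ : 1 ≤ Δ)
    (load : ℕ → Fin k → ℕ) (a b : ℕ → Fin k)
    (hinit : ∀ i, load 0 i = 1)
    (hrule : ∀ t, (∃ i, (∀ s < t, a s ≠ i) ∧ load t i < Δ) →
      (1 ≤ load t (a t)) ∧
      (∀ s ≤ t, a s ≠ b t) ∧
      (∀ j : Fin k, (∀ s ≤ t, a s ≠ j) → load t (b t) ≤ load t j) ∧
      (∀ i, load (t + 1) i
        = load t i - (if i = a t then 1 else 0) + (if i = b t then 1 else 0))) :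
    ∃ T : ℕ, (T : ℝ) ≤ k * min (Real.log Δ) (Real.log k) + k ∧
      ∀ i, (∀ s < T, a s ≠ i) → Δ ≤ load T i := by
  set M := min Δ k
  set N := ∑ w ∈ Icc 1 M, k / w
  have hM : 1 ≤ M := le_min hΔ hk
  obtain ⟨T, hTN, hT⟩ : ∃ T ≤ N, ∀ i, (∀ s < T, a s ≠ i) → Δ ≤ load T i := by
    by_contra! hopen
    have hround : ∀ t < N, IsGreedyRound load a b t := fun t ht =>
      have ⟨h₁, h₂, h₃, h₄⟩ := hrule t (hopen t ht.le)
      ⟨h₁, h₂, h₃, h₄⟩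
    have hlt : ∑ w ∈ Ico 1 M, k / w < ∑ w ∈ Icc 1 M, k / w := by
      rw [← Ico_add_one_right_eq_Icc, sum_Ico_succ_top hM]
      have : 0 < k / M := Nat.div_pos (min_le_right Δ k) hM
      omega
    exact hlt.not_ge (le_sum_Ico_div hinit hround fun t ht => hopen (t + 1) ht)
  refine ⟨T, ?_, hT⟩
  calc (T : ℝ) ≤ N := by exact_mod_cast hTN
    _ ≤ k * (1 + Real.log M) := cast_sum_Icc_div_le_mul_one_add_log k M
    _ = k * min (Real.log Δ) (Real.log k) + k := by
        rw [Nat.cast_min, Real.log_min (by positivity) (by positivity)]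
        ring
end

section
/- Under the player's balancing strategy in the balls-in-urns game, at every round the loads of any two distinct untouched urns differ by at most 1; consequently, if N_t is the total number of balls in the u_t untouched urns, every untouched urn holds either ⌈N_t/u_t⌉ or ⌊N_t/u_t⌋ balls, and the game has ended once N_t/u_t ≥ Δ. -/
/-!
From round `t` to `t + 1` the set of untouched urns can only shrink (by the urn `a t`), and the
only untouched urn whose load changes is `b t`, an urn of minimum load, which gains one ball;
so the untouched loads stay within `1` of each other. If `x` is one of them, every untouched
load lies in `[x - 1, x + 1]` and equals `x` at least once, hence `u * x < N + u` and
`N < u * (x + 1)`; this pins `x` to `⌊N/u⌋` or `⌈N/u⌉`, and gives `Δ ≤ x` once `Δ * u ≤ N`.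
-/

open Finset

def LoadsBalancedOn {ι : Type*} (f : ι → ℕ) (S : Set ι) : Prop :=
  ∀ i ∈ S, ∀ j ∈ S, f i ≤ f j + 1

theorem LoadsBalancedOn.mono {ι : Type*} {f : ι → ℕ} {S T : Set ι} (h : LoadsBalancedOn f S)
    (hTS : T ⊆ S) : LoadsBalancedOn f T :=
  fun i hi j hj => h i (hTS hi) j (hTS hj)

theorem LoadsBalancedOn.add_single_of_le {ι : Type*} [DecidableEq ι] {f g : ι → ℕ} {S : Set ι}
    {b : ι} (h : LoadsBalancedOn f S) (hb : ∀ j ∈ S, f b ≤ f j)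
    (hg : ∀ i ∈ S, g i = f i + if i = b then 1 else 0) : LoadsBalancedOn g S := by
  intro i hi j hj
  have hij := h i hi j hj
  rw [hg i hi, hg j hj]
  split_ifs with hib hjb hjb
  · omega
  · subst hib; have := hb j hj; omega
  · omega
  · omega

section SumBounds

variable {ι : Type*} {S : Finset ι} {f : ι → ℕ} {i : ι}

theorem card_mul_lt_sum_add_card (hi : i ∈ S) (h : ∀ j ∈ S, f i ≤ f j + 1) :
    #S * f i < ∑ j ∈ S, f j + #S := by
  calc #S * f i = ∑ _j ∈ S, f i := by simp
    _ < ∑ j ∈ S, (f j + 1) := sum_lt_sum h ⟨i, hi, Nat.lt_succ_self _⟩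
    _ = ∑ j ∈ S, f j + #S := by simp [sum_add_distrib]

theorem sum_lt_card_mul_succ (hi : i ∈ S) (h : ∀ j ∈ S, f j ≤ f i + 1) :
    ∑ j ∈ S, f j < #S * (f i + 1) := by
  calc ∑ j ∈ S, f j < ∑ _j ∈ S, (f i + 1) := sum_lt_sum h ⟨i, hi, Nat.lt_succ_self _⟩
    _ = #S * (f i + 1) := by simp

end SumBounds

theorem eq_div_or_eq_ceil_div {u N x : ℕ} (hlo : u * x < N + u) (hhi : N < u * (x + 1)) :
    x = N / u ∨ x = (N + u - 1) / u := by
  rw [mul_add, mul_one] at hhi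
  rcases le_or_gt (u * x) N with hle | hlt
  · exact Or.inl (Nat.div_eq_of_lt_le (by rw [mul_comm]; omega)
      (by rw [add_mul, one_mul, mul_comm]; omega)).symm
  · exact Or.inr (Nat.div_eq_of_lt_le (by rw [mul_comm]; omega)
      (by rw [add_mul, one_mul, mul_comm]; omega)).symm

theorem loadsBalancedOn_untouched {k Δ : ℕ} {load : ℕ → Fin k → ℕ} {a b : ℕ → Fin k}
    (hinit : ∀ i, load 0 i = 1)
    (hstep : ∀ t, (∃ i, (∀ s < t, a s ≠ i) ∧ load t i < Δ) →
      (∀ j : Fin k, (∀ s ≤ t, a s ≠ j) → load t (b t) ≤ load t j) ∧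
      (∀ i, load (t + 1) i
        = load t i - (if i = a t then 1 else 0) + (if i = b t then 1 else 0))) :
    ∀ t, (∀ s < t, ∃ i, (∀ r < s, a r ≠ i) ∧ load s i < Δ) →
      LoadsBalancedOn (load t) {i | ∀ s < t, a s ≠ i} := by
  intro t
  induction t with
  | zero => intro _ i _ j _; simp [hinit]
  | succ t ih =>
    intro hrunning
    obtain ⟨hbmin, hupd⟩ := hstep t (hrunning t t.lt_succ_self)
    have hsub : {i | ∀ s < t + 1, a s ≠ i} ⊆ {i | ∀ s < t, a s ≠ i} :=
      fun i hi s hs => hi s (hs.trans t.lt_succ_self)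
    refine ((ih fun s hs => hrunning s (hs.trans t.lt_succ_self)).mono hsub).add_single_of_le
      (fun j hj => hbmin j fun s hs => hj s (Nat.lt_succ_of_le hs)) fun i hi => ?_
    rw [hupd i, if_neg fun h => hi t t.lt_succ_self h.symm, Nat.sub_zero]

theorem balancing_invariant_general (k Δ : ℕ)
    (load : ℕ → Fin k → ℕ) (a b : ℕ → Fin k)
    (hinit : ∀ i, load 0 i = 1)
    (hrule : ∀ t, (∃ i, (∀ s < t, a s ≠ i) ∧ load t i < Δ) →
      (1 ≤ load t (a t)) ∧
      (∀ s ≤ t, a s ≠ b t) ∧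
      (∀ j : Fin k, (∀ s ≤ t, a s ≠ j) → load t (b t) ≤ load t j) ∧
      (∀ i, load (t + 1) i
        = load t i - (if i = a t then 1 else 0) + (if i = b t then 1 else 0))) :
    ∀ t, (∀ s < t, ∃ i, (∀ r < s, a r ≠ i) ∧ load s i < Δ) →
      (∀ i j : Fin k, (∀ s < t, a s ≠ i) → (∀ s < t, a s ≠ j) →
        load t i ≤ load t j + 1) ∧
      (∀ u N : ℕ,
        u = (Finset.univ.filter fun i : Fin k => ∀ s < t, a s ≠ i).card →
        N = ∑ i ∈ Finset.univ.filter (fun i : Fin k => ∀ s < t, a s ≠ i), load t i →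
        (∀ i : Fin k, (∀ s < t, a s ≠ i) →
          (load t i = N / u ∨ load t i = (N + u - 1) / u)) ∧
        (1 ≤ u → Δ * u ≤ N → ∀ i : Fin k, (∀ s < t, a s ≠ i) → Δ ≤ load t i)) := by
  intro t hrunning
  have hbal := loadsBalancedOn_untouched hinit (fun t h => (hrule t h).2.2) t hrunning
  refine ⟨fun i j hi hj => hbal i hi j hj, fun u N hu hN => ?_⟩
  subst hu hN
  set S := univ.filter fun i : Fin k => ∀ s < t, a s ≠ i
  have hS {i : Fin k} : i ∈ S ↔ ∀ s < t, a s ≠ i := by simp [S]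
  have hupper {i : Fin k} (hi : ∀ s < t, a s ≠ i) : ∑ j ∈ S, load t j < #S * (load t i + 1) :=
    sum_lt_card_mul_succ (hS.mpr hi) fun j hj => hbal j (hS.mp hj) i hi
  refine ⟨fun i hi => eq_div_or_eq_ceil_div
    (card_mul_lt_sum_add_card (hS.mpr hi) fun j hj => hbal i hi j (hS.mp hj)) (hupper hi),
    fun _ hΔN i hi => ?_⟩
  have hlt : #S * Δ < #S * (load t i + 1) := (mul_comm Δ _ ▸ hΔN).trans_lt (hupper hi)
  exact Nat.lt_succ_iff.mp (Nat.lt_of_mul_lt_mul_left hlt)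

/-- In the balls-in-urns game under the player's balancing strategy, at every round (while
the rules have been followed, i.e. as long as the game was still running at all earlier
rounds) the loads of any two untouched urns differ by at most `1`; consequently every
untouched urn holds either `⌊N/u⌋` or `⌈N/u⌉` balls, where `u` is the number of untouched
urns and `N` their total load, and the game has ended as soon as `N/u ≥ Δ`. -/
theorem balancing_invariant (k Δ : ℕ) (hk : 1 ≤ k) (hΔ : 1 ≤ Δ)
    (load : ℕ → Fin k → ℕ) (a b : ℕ → Fin k)
    (hinit : ∀ i, load 0 i = 1)
    (hrule : ∀ t, (∃ i, (∀ s < t, a s ≠ i) ∧ load t i < Δ) →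
      (1 ≤ load t (a t)) ∧
      (∀ s ≤ t, a s ≠ b t) ∧
      (∀ j : Fin k, (∀ s ≤ t, a s ≠ j) → load t (b t) ≤ load t j) ∧
      (∀ i, load (t + 1) i
        = load t i - (if i = a t then 1 else 0) + (if i = b t then 1 else 0))) :
    ∀ t, (∀ s < t, ∃ i, (∀ r < s, a r ≠ i) ∧ load s i < Δ) →
      (∀ i j : Fin k, (∀ s < t, a s ≠ i) → (∀ s < t, a s ≠ j) →
        load t i ≤ load t j + 1) ∧
      (∀ u N : ℕ,
        u = (Finset.univ.filter fun i : Fin k => ∀ s < t, a s ≠ i).card →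
        N = ∑ i ∈ Finset.univ.filter (fun i : Fin k => ∀ s < t, a s ≠ i), load t i →
        (∀ i : Fin k, (∀ s < t, a s ≠ i) →
          (load t i = N / u ∨ load t i = (N + u - 1) / u)) ∧
        (1 ≤ u → Δ * u ≤ N → ∀ i : Fin k, (∀ s < t, a s ≠ i) → Δ ≤ load t i)) :=
  balancing_invariant_general k Δ load a b hinit hrule
end
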